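/- arXiv:1001.0312 — 4 statements merged into one kernel-verified Lean document; each statement's English description precedes it below -/
import Mathlib

section
/- Gauss's identity: Let n be a nonnegative integer and let q be a complex number such that q^j ≠ 1 for every integer j with 1 ≤ j ≤ n. Then ∑_{k=0}^n (−1)^k / ((q;q)_k · (q;q)_{n−k}) equals 0 if n is odd, and equals 1 / ((1 − q^2)(1 − q^4) ⋯ (1 − q^n)) if n is even. -/
/-- The finite q-Pochhammer symbol `(a; q)_k = ∏_{i=0}^{k-1} (1 - a q^i)`. -/
noncomputable def qPoch (q a : ℂ) (k : ℕ) : ℂ := ∏ i ∈ Finset.range k, (1 - a * q ^ i)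

/-!
Write `Sₙ(z) = ∑ₖ zᵏ / ((q;q)ₖ (q;q)ₙ₋ₖ)`; the theorem is about `Sₙ(-1)`. Splitting
`1 - qⁿ⁺¹ = (1 - qᵏ) + qᵏ (1 - qⁿ⁺¹⁻ᵏ)` and cancelling one Pochhammer factor in each part gives
`(1 - qⁿ⁺¹) Sₙ₊₁(z) = z Sₙ(z) + Sₙ(qz)`, and the first part alone gives
`Sₙ₊₁(qz) = Sₙ₊₁(z) - z Sₙ(z)`. Together they yield the three-term recurrence
`(1 - qⁿ⁺²) Sₙ₊₂(z) = (1 + z) Sₙ₊₁(z) - z Sₙ(z)`, which at `z = -1` collapses to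
`(1 - qⁿ⁺²) Sₙ₊₂(-1) = Sₙ(-1)`. Since `S₀(-1) = 1` and `S₁(-1) = 0`, induction finishes.
-/

open Finset

namespace GaussIdentity

variable {q : ℂ}

theorem qPoch_self_succ (q : ℂ) (k : ℕ) :
    qPoch q q (k + 1) = qPoch q q k * (1 - q ^ (k + 1)) := by
  rw [qPoch, prod_range_succ, ← qPoch, pow_succ']

noncomputable def qPochPairInv (q : ℂ) (n k : ℕ) : ℂ := (qPoch q q k * qPoch q q (n - k))⁻¹

/-- The Rogers–Szegő polynomial `Hₙ(z)` divided by `(q;q)ₙ`. -/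
noncomputable def rogersSzego (q : ℂ) (n : ℕ) (z : ℂ) : ℂ :=
  ∑ k ∈ range (n + 1), z ^ k * qPochPairInv q n k

theorem one_sub_pow_mul_qPochPairInv_succ_succ (n k : ℕ) (h : q ^ (k + 1) ≠ 1) :
    (1 - q ^ (k + 1)) * qPochPairInv q (n + 1) (k + 1) = qPochPairInv q n k := by
  rw [qPochPairInv, qPochPairInv, Nat.add_sub_add_right, qPoch_self_succ, mul_right_comm, mul_inv,
    mul_left_comm, mul_inv_cancel₀ (sub_ne_zero.mpr h.symm), mul_one]

theorem one_sub_pow_mul_qPochPairInv_succ {n k : ℕ} (hk : k ≤ n) (h : q ^ (n + 1 - k) ≠ 1) :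
    (1 - q ^ (n + 1 - k)) * qPochPairInv q (n + 1) k = qPochPairInv q n k := by
  rw [Nat.sub_add_comm hk] at h ⊢
  rw [qPochPairInv, qPochPairInv, Nat.sub_add_comm hk, qPoch_self_succ, ← mul_assoc, mul_inv,
    mul_left_comm, mul_inv_cancel₀ (sub_ne_zero.mpr h.symm), mul_one]

section

variable {n : ℕ} (hq : ∀ j, 1 ≤ j → j ≤ n + 1 → q ^ j ≠ 1)
include hq

theorem sum_one_sub_pow_mul_qPochPairInv (z : ℂ) :
    ∑ k ∈ range (n + 2), z ^ k * ((1 - q ^ k) * qPochPairInv q (n + 1) k) =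
      z * rogersSzego q n z := by
  rw [sum_range_succ', rogersSzego, mul_sum]
  simp only [pow_zero, sub_self, zero_mul, mul_zero, add_zero]
  refine sum_congr rfl fun k hk => ?_
  have hkn := mem_range_succ_iff.mp hk
  rw [one_sub_pow_mul_qPochPairInv_succ_succ n k (hq (k + 1) (by omega) (by omega)), pow_succ']
  ring

theorem sum_pow_mul_one_sub_pow_mul_qPochPairInv (z : ℂ) :
    ∑ k ∈ range (n + 2), z ^ k * (q ^ k * (1 - q ^ (n + 1 - k)) * qPochPairInv q (n + 1) k) =
      rogersSzego q n (q * z) := by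
  rw [sum_range_succ, rogersSzego]
  simp only [Nat.sub_self, pow_zero, sub_self, mul_zero, zero_mul, add_zero]
  refine sum_congr rfl fun k hk => ?_
  have hkn := mem_range_succ_iff.mp hk
  rw [mul_assoc (q ^ k), one_sub_pow_mul_qPochPairInv_succ hkn (hq _ (by omega) (by omega)),
    mul_pow]
  ring

theorem one_sub_pow_mul_rogersSzego_succ (z : ℂ) :
    (1 - q ^ (n + 1)) * rogersSzego q (n + 1) z =
      z * rogersSzego q n z + rogersSzego q n (q * z) := by
  rw [← sum_one_sub_pow_mul_qPochPairInv hq, ← sum_pow_mul_one_sub_pow_mul_qPochPairInv hq,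
    ← sum_add_distrib, rogersSzego, mul_sum]
  refine sum_congr rfl fun k hk => ?_
  have hsplit : q ^ k * q ^ (n + 1 - k) = q ^ (n + 1) := by
    rw [← pow_add, Nat.add_sub_cancel' (mem_range_succ_iff.mp hk)]
  linear_combination z ^ k * qPochPairInv q (n + 1) k * hsplit

theorem rogersSzego_succ_mul_left (z : ℂ) :
    rogersSzego q (n + 1) (q * z) = rogersSzego q (n + 1) z - z * rogersSzego q n z := by
  rw [← sum_one_sub_pow_mul_qPochPairInv hq, rogersSzego, rogersSzego, ← sum_sub_distrib]
  refine sum_congr rfl fun k _ => ?_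
  ring

end

theorem rogersSzego_add_two {n : ℕ} (hq : ∀ j, 1 ≤ j → j ≤ n + 2 → q ^ j ≠ 1) (z : ℂ) :
    (1 - q ^ (n + 2)) * rogersSzego q (n + 2) z =
      (1 + z) * rogersSzego q (n + 1) z - z * rogersSzego q n z := by
  rw [one_sub_pow_mul_rogersSzego_succ hq,
    rogersSzego_succ_mul_left fun j h1 h2 => hq j h1 (by omega)]
  ring

theorem rogersSzego_zero (z : ℂ) : rogersSzego q 0 z = 1 := by
  simp [rogersSzego, qPochPairInv, qPoch]

theorem rogersSzego_one_neg_one (q : ℂ) : rogersSzego q 1 (-1) = 0 := by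
  simp [rogersSzego, qPochPairInv, qPoch, sum_range_succ]

theorem rogersSzego_add_two_neg_one {n : ℕ} (hq : ∀ j, 1 ≤ j → j ≤ n + 2 → q ^ j ≠ 1) :
    (1 - q ^ (n + 2)) * rogersSzego q (n + 2) (-1) = rogersSzego q n (-1) := by
  linear_combination rogersSzego_add_two hq (-1)

theorem rogersSzego_two_mul_add_one_neg_one {m : ℕ}
    (hq : ∀ j, 1 ≤ j → j ≤ 2 * m + 1 → q ^ j ≠ 1) : rogersSzego q (2 * m + 1) (-1) = 0 := by
  induction m with
  | zero => exact rogersSzego_one_neg_one q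
  | succ m ih =>
    have hrec := rogersSzego_add_two_neg_one (n := 2 * m + 1) fun j h1 h2 => hq j h1 (by omega)
    rw [ih fun j h1 h2 => hq j h1 (by omega)] at hrec
    exact (mul_eq_zero.mp hrec).resolve_left (sub_ne_zero.mpr (hq _ (by omega) le_rfl).symm)

theorem rogersSzego_two_mul_neg_one {m : ℕ} (hq : ∀ j, 1 ≤ j → j ≤ 2 * m → q ^ j ≠ 1) :
    rogersSzego q (2 * m) (-1) = (∏ i ∈ range m, (1 - q ^ (2 * (i + 1))))⁻¹ := by
  induction m with
  | zero => simp [rogersSzego_zero]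
  | succ m ih =>
    have hrec := rogersSzego_add_two_neg_one (n := 2 * m) fun j h1 h2 => hq j h1 (by omega)
    rw [ih fun j h1 h2 => hq j h1 (by omega)] at hrec
    have hne : 1 - q ^ (2 * m + 2) ≠ 0 := sub_ne_zero.mpr (hq _ (by omega) le_rfl).symm
    rw [prod_range_succ, mul_inv, ← hrec, show 2 * (m + 1) = 2 * m + 2 by ring,
      mul_right_comm, mul_inv_cancel₀ hne, one_mul]

end GaussIdentity

open GaussIdentity in
/-- Gauss's identity. -/
theorem gauss_identity (n : ℕ) (q : ℂ) (hq : ∀ j : ℕ, 1 ≤ j → j ≤ n → q ^ j ≠ 1) :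
    ∑ k ∈ Finset.range (n + 1), (-1 : ℂ) ^ k / (qPoch q q k * qPoch q q (n - k)) =
      if Odd n then 0
      else 1 / ∏ i ∈ Finset.range (n / 2), (1 - q ^ (2 * (i + 1))) := by
  simp only [div_eq_mul_inv]
  change rogersSzego q n (-1) = _
  obtain ⟨m, rfl | rfl⟩ := Nat.even_or_odd' n
  · rw [if_neg (Nat.not_odd_iff_even.mpr (even_two_mul m)), Nat.mul_div_cancel_left m two_pos,
      one_mul]
    exact rogersSzego_two_mul_neg_one hq
  · rw [if_pos (odd_two_mul_add_one m)]
    exact rogersSzego_two_mul_add_one_neg_one hq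
end

section
/- Recurrence for the Gauss sum: Let n ≥ 2 be an integer and let q be a complex number such that q^j ≠ 1 for every integer j with 1 ≤ j ≤ n. Setting F_n(q) = ∑_{k=0}^n (−1)^k / ((q;q)_k · (q;q)_{n−k}), one has F_n(q) = F_{n−2}(q) / (1 − q^n). -/
open Finset

lemma qPoch_succ (q : ℂ) (k : ℕ) : qPoch q q (k + 1) = qPoch q q k * (1 - q ^ (k + 1)) := by
  simp only [qPoch, prod_range_succ, ← pow_succ']

lemma qPoch_ne_zero {q : ℂ} {n : ℕ} (hq : ∀ j : ℕ, 1 ≤ j → j ≤ n → q ^ j ≠ 1) {k : ℕ}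
    (hk : k ≤ n) : qPoch q q k ≠ 0 := by
  refine prod_ne_zero_iff.mpr fun i hi => sub_ne_zero.mpr fun h => ?_
  rw [← pow_succ'] at h
  exact hq (i + 1) (by omega) (by simp at hi; omega) h.symm

lemma one_sub_pow_succ_div_qPoch_succ {q : ℂ} {k : ℕ} (h : qPoch q q (k + 1) ≠ 0) (c : ℂ) :
    (1 - q ^ (k + 1)) * (c / qPoch q q (k + 1)) = c / qPoch q q k := by
  rw [qPoch_succ] at h ⊢
  obtain ⟨hk, hq⟩ := mul_ne_zero_iff.mp h
  field_simp

noncomputable def qGaussTerm (q : ℂ) (i j : ℕ) : ℂ := (-1) ^ i / (qPoch q q i * qPoch q q j)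

noncomputable def qGaussSum (q : ℂ) (n : ℕ) : ℂ := ∑ p ∈ antidiagonal n, qGaussTerm q p.1 p.2

lemma qGaussSum_eq_sum_range (q : ℂ) (n : ℕ) :
    qGaussSum q n = ∑ k ∈ range (n + 1), (-1 : ℂ) ^ k / (qPoch q q k * qPoch q q (n - k)) :=
  Nat.sum_antidiagonal_eq_sum_range_succ (qGaussTerm q) n

section Lowering

variable {q : ℂ} {n : ℕ}

lemma one_sub_pow_mul_qGaussTerm_succ_left {i : ℕ} (h : qPoch q q (i + 1) ≠ 0) (j : ℕ) :
    (1 - q ^ (i + 1)) * qGaussTerm q (i + 1) j = -qGaussTerm q i j := by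
  rw [qGaussTerm, mul_comm (qPoch q q _), ← div_div, one_sub_pow_succ_div_qPoch_succ h, qGaussTerm]
  ring

lemma one_sub_pow_mul_qGaussTerm_succ_right {j : ℕ} (h : qPoch q q (j + 1) ≠ 0) (i : ℕ) :
    (1 - q ^ (j + 1)) * qGaussTerm q i (j + 1) = qGaussTerm q i j := by
  simp only [qGaussTerm, ← div_div, one_sub_pow_succ_div_qPoch_succ h]

lemma sum_one_sub_pow_fst_mul_qGaussTerm (h : ∀ k ≤ n + 1, qPoch q q k ≠ 0) :
    ∑ p ∈ antidiagonal (n + 1), (1 - q ^ p.1) * qGaussTerm q p.1 p.2 = -qGaussSum q n := by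
  rw [Nat.sum_antidiagonal_succ, pow_zero, sub_self, zero_mul, zero_add, qGaussSum,
    ← sum_neg_distrib]
  refine sum_congr rfl fun p hp => one_sub_pow_mul_qGaussTerm_succ_left (h _ ?_) _
  rw [HasAntidiagonal.mem_antidiagonal] at hp
  omega

lemma sum_pow_fst_mul_one_sub_pow_snd_mul_qGaussTerm (h : ∀ k ≤ n + 1, qPoch q q k ≠ 0) :
    ∑ p ∈ antidiagonal (n + 1), q ^ p.1 * (1 - q ^ p.2) * qGaussTerm q p.1 p.2 =
      ∑ p ∈ antidiagonal n, q ^ p.1 * qGaussTerm q p.1 p.2 := by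
  rw [Nat.sum_antidiagonal_succ', pow_zero, sub_self, mul_zero, zero_mul, zero_add]
  refine sum_congr rfl fun p hp => ?_
  rw [mul_assoc, one_sub_pow_mul_qGaussTerm_succ_right (h _ ?_)]
  rw [HasAntidiagonal.mem_antidiagonal] at hp
  omega

end Lowering

lemma one_sub_pow_mul_qGaussSum_add_two {q : ℂ} {n : ℕ} (h : ∀ k ≤ n + 2, qPoch q q k ≠ 0) :
    (1 - q ^ (n + 2)) * qGaussSum q (n + 2) = qGaussSum q n := by
  have h' : ∀ k ≤ n + 1, qPoch q q k ≠ 0 := fun k hk => h k (by omega)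
  calc (1 - q ^ (n + 2)) * qGaussSum q (n + 2)
      = ∑ p ∈ antidiagonal (n + 2), ((1 - q ^ p.1) * qGaussTerm q p.1 p.2 +
          q ^ p.1 * (1 - q ^ p.2) * qGaussTerm q p.1 p.2) := by
        rw [qGaussSum, mul_sum]
        refine sum_congr rfl fun p hp => ?_
        rw [← HasAntidiagonal.mem_antidiagonal.mp hp, pow_add]
        ring
    _ = -qGaussSum q (n + 1) + ∑ p ∈ antidiagonal (n + 1), q ^ p.1 * qGaussTerm q p.1 p.2 := by
        rw [sum_add_distrib, sum_one_sub_pow_fst_mul_qGaussTerm h,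
          sum_pow_fst_mul_one_sub_pow_snd_mul_qGaussTerm h]
    _ = -∑ p ∈ antidiagonal (n + 1), (1 - q ^ p.1) * qGaussTerm q p.1 p.2 := by
        rw [qGaussSum, ← sum_neg_distrib, ← sum_add_distrib, ← sum_neg_distrib]
        exact sum_congr rfl fun p _ => by ring
    _ = qGaussSum q n := by rw [sum_one_sub_pow_fst_mul_qGaussTerm h', neg_neg]

/-- Recurrence for the Gauss sum: `F_n(q) = F_{n-2}(q) / (1 - q^n)`. -/
theorem gauss_recurrence (n : ℕ) (hn : 2 ≤ n) (q : ℂ)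
    (hq : ∀ j : ℕ, 1 ≤ j → j ≤ n → q ^ j ≠ 1) :
    ∑ k ∈ Finset.range (n + 1), (-1 : ℂ) ^ k / (qPoch q q k * qPoch q q (n - k)) =
      (∑ k ∈ Finset.range (n - 2 + 1),
        (-1 : ℂ) ^ k / (qPoch q q k * qPoch q q (n - 2 - k))) / (1 - q ^ n) := by
  obtain ⟨m, rfl⟩ : ∃ m, n = m + 2 := ⟨n - 2, by omega⟩
  have hqn : 1 - q ^ (m + 2) ≠ 0 := sub_ne_zero.mpr (hq _ (by omega) le_rfl).symm
  rw [Nat.add_sub_cancel, ← qGaussSum_eq_sum_range, ← qGaussSum_eq_sum_range, eq_div_iff hqn,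
    mul_comm, one_sub_pow_mul_qGaussSum_add_two fun k hk => qPoch_ne_zero hq hk]
end

section
/- Combinatorial telescoping relation for Gauss's identity: Let n ≥ 1 and 0 ≤ k ≤ n be integers and let N be a nonnegative integer. Then the number of pairs (λ,μ) in P_{n,k} with |λ| + |μ| = N equals (∑_{t=0}^∞ of the number of pairs (λ,μ) in P_{n−2,k} with |λ| + |μ| = N − t·n) plus the number of pairs in H_{n,k} with |λ| + |μ| = N plus the number of pairs in H_{n,k+1} with |λ| + |μ| = N. -/
/-- Multiplicity of the part `j` in the partition `lam`, with the convention
`m_0(lam) = +∞`. -/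
def multE (j : ℕ) (lam : Multiset ℕ) : ℕ∞ := if j = 0 then ⊤ else (lam.count j : ℕ∞)

/-- `P n k` is the set of pairs `(λ, μ)` of partitions (multisets of positive integers)
with all parts of `λ` at most `k` and all parts of `μ` at most `n - k`;
it is empty when `n < k` (in particular when `n < 0`). -/
def P (n : ℤ) (k : ℕ) : Set (Multiset ℕ × Multiset ℕ) :=
  {p | (k : ℤ) ≤ n ∧ (∀ x ∈ p.1, 0 < x ∧ x ≤ k) ∧ ∀ x ∈ p.2, 0 < x ∧ (x : ℤ) ≤ n - k}

/-- `H n k = {(λ, μ) ∈ P n k : m_k(λ) < m_{n-k}(μ)}`, with the convention `m_0 = +∞`. -/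
def H (n k : ℕ) : Set (Multiset ℕ × Multiset ℕ) :=
  {p ∈ P n k | multE k p.1 < multE (n - k) p.2}

lemma finite_master (N : ℕ) :
    {p : Multiset ℕ × Multiset ℕ | (∀ x ∈ p.1, 0 < x) ∧ (∀ x ∈ p.2, 0 < x) ∧ p.1.sum + p.2.sum ≤ N}.Finite := by
  classical
  set M : Multiset ℕ := N • (Finset.range (N+1)).val with hMdef
  have key : ∀ s : Multiset ℕ, (∀ x ∈ s, 0 < x) → s.sum ≤ N → s ≤ M := by
    intro s hs hsum
    rw [Multiset.le_iff_count]
    intro a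
    rcases Nat.eq_zero_or_pos (s.count a) with h | h
    · simp [h]
    · have ha : a ∈ s := Multiset.count_pos.mp h
      have ha1 : 0 < a := hs a ha
      have haN : a ≤ N := le_trans (Multiset.single_le_sum (fun x _ => Nat.zero_le x) a ha) hsum
      have hcard : Multiset.card s ≤ s.sum := by
        simpa using Multiset.card_nsmul_le_sum (fun x hx => hs x hx)
      have hc : s.count a ≤ N := le_trans (Multiset.count_le_card a s) (le_trans hcard hsum)
      have hMa : M.count a = N := by
        rw [hMdef, Multiset.count_nsmul]
        have hmem : a ∈ (Finset.range (N+1)).val := Finset.mem_range.mpr (by omega)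
        rw [Multiset.count_eq_one_of_mem (Finset.range (N+1)).nodup hmem, mul_one]
      omega
  apply Set.Finite.subset ((Set.finite_Iic M).prod (Set.finite_Iic M))
  rintro ⟨l, m⟩ ⟨h1, h2, h3⟩
  simp only at h1 h2 h3
  exact ⟨key l h1 (le_trans (Nat.le_add_right _ _) h3),
    key m h2 (le_trans (Nat.le_add_left _ _) h3)⟩

lemma ncard_biUnion {α : Type*} (s : Finset ℕ) (f : ℕ → Set α)
    (hfin : ∀ i, (f i).Finite)
    (hdisj : ∀ i ∈ s, ∀ j ∈ s, i ≠ j → Disjoint (f i) (f j)) :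
    (⋃ i ∈ s, f i).ncard = ∑ i ∈ s, (f i).ncard := by
  classical
  induction s using Finset.induction_on with
  | empty => simp
  | @insert a s ha ih =>
    have hd : Disjoint (f a) (⋃ i ∈ s, f i) := by
      rw [Set.disjoint_left]
      intro x hx hx'
      rw [Set.mem_iUnion₂] at hx'
      obtain ⟨i, hi, hxi⟩ := hx'
      have := hdisj a (Finset.mem_insert_self a s) i (Finset.mem_insert_of_mem hi)
        (by rintro rfl; exact ha hi)
      exact (Set.disjoint_left.mp this) hx hxi
    rw [Finset.set_biUnion_insert,
      Set.ncard_union_eq hd (hfin a) (Set.Finite.biUnion s.finite_toSet fun i _ => hfin i),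
      ih (fun i hi j hj hij => hdisj i (Finset.mem_insert_of_mem hi) j (Finset.mem_insert_of_mem hj) hij),
      Finset.sum_insert ha]

namespace GaussAux
open Multiset

variable (n k : ℕ)

def S1 : Set (Multiset ℕ × Multiset ℕ) :=
  {p | p ∈ P n k ∧ ¬ (multE k p.1 < multE (n-k) p.2) ∧ (n - k - 1 = 0 ∨ 0 < p.2.count (n-k-1))}

def S2 : Set (Multiset ℕ × Multiset ℕ) :=
  {p | p ∈ P n k ∧ ¬ (multE k p.1 < multE (n-k) p.2) ∧ n - k - 1 ≠ 0 ∧ p.2.count (n-k-1) = 0}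

def F1 (p : Multiset ℕ × Multiset ℕ) : Multiset ℕ × Multiset ℕ :=
  (p.1 - replicate (p.2.count (n-k)) k + replicate (p.2.count (n-k)) (k+1),
   p.2 - replicate (p.2.count (n-k)) (n-k) +
     if n - k - 1 = 0 then 0 else replicate (p.2.count (n-k)) (n-k-1))

def G1 (q : Multiset ℕ × Multiset ℕ) : Multiset ℕ × Multiset ℕ :=
  (q.1 - replicate (q.1.count (k+1)) (k+1) +
     (if k = 0 then 0 else replicate (q.1.count (k+1)) k),
   q.2 - replicate (q.1.count (k+1)) (n-k-1) + replicate (q.1.count (k+1)) (n-k))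

variable {n k}

lemma sub_rep_count_zero {s : Multiset ℕ} {a : ℕ} (h : s.count a = 0) (b : ℕ) :
    s - replicate b a = s := by
  rw [Multiset.ext]
  intro x
  rw [count_sub, count_replicate]
  split_ifs with hx
  · subst hx; omega
  · omega

lemma count_eq_zero_big {s : Multiset ℕ} {c : ℤ} {x : ℕ} (hs : ∀ y ∈ s, 0 < y ∧ (y:ℤ) ≤ c)
    (hx : c < x) : s.count x = 0 := by
  rw [count_eq_zero]
  intro hmem
  have := (hs x hmem).2
  omega

lemma k_lt_n_of_not (hn : 1 ≤ n) (hk : k ≤ n) {l m : Multiset ℕ}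
    (hnc : ¬ (multE k l < multE (n-k) m)) : k < n := by
  rcases Nat.lt_or_ge k n with h | h
  · exact h
  · exfalso
    have hkn : k = n := le_antisymm hk h
    apply hnc
    subst hkn
    simp only [multE, Nat.sub_self, if_pos rfl]
    rw [if_neg (by omega)]
    exact ENat.coe_lt_top _

lemma b_le_count (hk0 : k ≠ 0) (hnk : n - k ≠ 0) {l m : Multiset ℕ}
    (hnc : ¬ (multE k l < multE (n-k) m)) : m.count (n-k) ≤ l.count k := by
  simp only [multE, if_neg hk0, if_neg hnk, not_lt, Nat.cast_le] at hnc
  exact hnc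

lemma count_zero_parts {l : Multiset ℕ} {c : ℕ} (hl : ∀ x ∈ l, 0 < x ∧ x ≤ c) : l.count 0 = 0 := by
  rw [Multiset.count_eq_zero]
  intro hmem
  exact absurd (hl _ hmem).1 (by omega)

/-- count of k+1 in l is 0 when parts of l are ≤ k -/
lemma count_succ_zero {l : Multiset ℕ} (hl : ∀ x ∈ l, 0 < x ∧ x ≤ k) : l.count (k+1) = 0 := by
  rw [count_eq_zero]
  intro hmem
  have := (hl _ hmem).2
  omega

theorem F1_spec (hn : 1 ≤ n) (hk : k ≤ n) {p : Multiset ℕ × Multiset ℕ} (hp : p ∈ S1 n k) :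
    F1 n k p ∈ H n (k+1) ∧ (F1 n k p).1.sum + (F1 n k p).2.sum = p.1.sum + p.2.sum := by
  obtain ⟨l, m⟩ := p
  obtain ⟨⟨hkZ, hl, hm⟩, hnc, hor⟩ := hp
  simp only at hl hm hor hnc
  have hkn : k < n := k_lt_n_of_not hn hk hnc
  set b := m.count (n-k) with hb
  have hnk0 : n - k ≠ 0 := by omega
  have hrm : replicate b (n-k) ≤ m := le_count_iff_replicate_le.mp le_rfl
  have hmsum : m.sum = (m - replicate b (n-k)).sum + b * (n-k) := by
    conv_lhs => rw [← tsub_add_cancel_of_le hrm]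
    rw [sum_add, sum_replicate, smul_eq_mul]
  have hlsum : l.sum = (l - replicate b k).sum + b * k := by
    rcases Nat.eq_zero_or_pos k with rfl | hk0
    · rw [sub_rep_count_zero (count_zero_parts hl) b, Nat.mul_zero, Nat.add_zero]
    · have := b_le_count (by omega) hnk0 hnc
      conv_lhs => rw [← tsub_add_cancel_of_le (le_count_iff_replicate_le.mp this)]
      rw [sum_add, sum_replicate, smul_eq_mul]
  have hckl : (l - replicate b k).count (k+1) = 0 := by
    rw [count_sub, count_replicate, if_neg (by omega), count_succ_zero hl]
  have hcnkm : (m - replicate b (n-k)).count (n-k) = 0 := by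
    rw [count_sub, count_replicate, if_pos rfl, hb, Nat.sub_self]
  constructor
  · refine ⟨⟨by push_cast; omega, ?_, ?_⟩, ?_⟩
    · -- parts of α
      intro x hx
      simp only [F1, mem_add] at hx
      rcases hx with hx | hx
      · have hxl : x ∈ l := mem_of_le (tsub_le_self) hx
        have := hl x hxl
        omega
      · rw [eq_of_mem_replicate hx]
        omega
    · -- parts of β
      intro x hx
      simp only [F1, mem_add] at hx
      rcases hx with hx | hx
      · have hxm : x ∈ m - replicate b (n-k) := hx
        have hxm' : x ∈ m := mem_of_le (tsub_le_self) hxm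
        have h1 := hm x hxm'
        have hxne : x ≠ n - k := by
          intro hxe
          rw [← hxe] at hcnkm
          exact (count_eq_zero.mp hcnkm) (hxe ▸ hxm)
        constructor
        · exact h1.1
        · push_cast
          have : (x:ℤ) ≤ (n:ℤ) - k := h1.2
          omega
      · split_ifs at hx with h0
        · simp at hx
        · rw [eq_of_mem_replicate hx]
          constructor
          · omega
          · push_cast; omega
    · -- multE inequality
      simp only [F1, multE, if_neg (Nat.succ_ne_zero k)]
      have hcα : (l - replicate b k + replicate b (k+1)).count (k+1) = b := by
        rw [count_add, count_replicate, if_pos rfl, hckl, Nat.zero_add]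
      rw [hcα]
      rcases Nat.eq_zero_or_pos (n - (k+1)) with h0 | h0
      · rw [if_pos h0]
        exact ENat.coe_lt_top _
      · rw [if_neg (by omega)]
        have hor' : 0 < m.count (n-k-1) := by
          rcases hor with h | h
          · omega
          · exact h
        have : (m - replicate b (n-k) + if n - k - 1 = 0 then 0 else replicate b (n-k-1)).count (n - (k+1)) = m.count (n-k-1) + b := by
          have hnn : n - (k+1) = n - k - 1 := by omega
          rw [hnn, if_neg (by omega), count_add, count_replicate, if_pos rfl, count_sub,
            count_replicate, if_neg (by omega), Nat.sub_zero]
        rw [this]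
        rw [Nat.cast_lt]
        omega
  · -- sums
    simp only [F1]
    rw [← hb]
    split_ifs with h0
    · have hnk1 : n - k = 1 := by omega
      rw [hnk1] at hmsum
      rw [hnk1]
      simp only [sum_add, sum_replicate, smul_eq_mul, sum_zero]
      have e1 : b * (k+1) = b * k + b := by ring
      have e2 : b * 1 = b := by ring
      omega
    · obtain ⟨j, hj⟩ : ∃ j, n - k = j + 1 := ⟨n - k - 1, by omega⟩
      have hj1 : n - k - 1 = j := by omega
      rw [hj] at hmsum
      rw [hj1, hj]
      simp only [sum_add, sum_replicate, smul_eq_mul]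
      have e1 : b * (k+1) = b * k + b := by ring
      have e2 : b * (j+1) = b * j + b := by ring
      omega

end GaussAux

namespace GaussAux
open Multiset

variable {n k : ℕ}

theorem G1_F1 (hn : 1 ≤ n) (hk : k ≤ n) {p : Multiset ℕ × Multiset ℕ} (hp : p ∈ S1 n k) :
    G1 n k (F1 n k p) = p := by
  obtain ⟨l, m⟩ := p
  obtain ⟨⟨hkZ, hl, hm⟩, hnc, hor⟩ := hp
  simp only at hl hm hor hnc
  have hkn : k < n := k_lt_n_of_not hn hk hnc
  set b := m.count (n-k) with hb
  have hnk0 : n - k ≠ 0 := by omega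
  have hrm : replicate b (n-k) ≤ m := le_count_iff_replicate_le.mp le_rfl
  have hckl : (l - replicate b k).count (k+1) = 0 := by
    rw [count_sub, count_replicate, if_neg (by omega), count_succ_zero hl]
  have hm0 : m.count 0 = 0 := by
    rw [count_eq_zero]; intro hmem; have := (hm 0 hmem).1; omega
  have hcα : (l - replicate b k + replicate b (k+1)).count (k+1) = b := by
    rw [count_add, count_replicate, if_pos rfl, hckl, Nat.zero_add]
  simp only [F1, G1, ← hb]
  rw [hcα, add_tsub_cancel_right]
  refine Prod.ext ?_ ?_
  · -- first component
    simp only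
    rcases Nat.eq_zero_or_pos k with rfl | hk0
    · rw [if_pos rfl, add_zero, sub_rep_count_zero (count_zero_parts hl) b]
    · rw [if_neg (by omega)]
      exact tsub_add_cancel_of_le
        (le_count_iff_replicate_le.mp (b_le_count (by omega) hnk0 hnc))
  · -- second component
    simp only
    split_ifs with h0
    · rw [add_zero]
      have hz : (m - replicate b (n-k)).count (n-k-1) = 0 := by
        rw [h0, count_sub, count_replicate]
        rw [hm0]
        split_ifs <;> omega
      rw [sub_rep_count_zero hz b]
      exact tsub_add_cancel_of_le hrm
    · rw [add_tsub_cancel_right]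
      exact tsub_add_cancel_of_le hrm

theorem G1_spec {q : Multiset ℕ × Multiset ℕ} (hq : q ∈ H n (k+1)) :
    G1 n k q ∈ S1 n k ∧ (G1 n k q).1.sum + (G1 n k q).2.sum = q.1.sum + q.2.sum := by
  obtain ⟨lq, mq⟩ := q
  obtain ⟨⟨hkZ, hlq, hmq⟩, hlt⟩ := hq
  simp only at hlq hmq hlt
  have hkn : k < n := by exact_mod_cast (by omega : (k:ℤ) < n)
  set a := lq.count (k+1) with ha
  have hra : replicate a (k+1) ≤ lq := le_count_iff_replicate_le.mp le_rfl
  have hlq0 : lq.count 0 = 0 := by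
    rw [count_eq_zero]; intro hmem; have := (hlq 0 hmem).1; omega
  have hmq0 : mq.count 0 = 0 := by
    rw [count_eq_zero]; intro hmem; have := (hmq 0 hmem).1; omega
  have hcnk : mq.count (n-k) = 0 := by
    refine count_eq_zero_big hmq ?_
    push_cast; omega
  have hck1 : (lq - replicate a (k+1)).count (k+1) = 0 := by
    rw [count_sub, count_replicate, if_pos rfl, ha, Nat.sub_self]
  -- the case distinction on n-(k+1) = 0
  have hmain : (n - (k+1) = 0 ∧ ∀ x ∈ mq, False) ∨ (n - (k+1) ≠ 0 ∧ a < mq.count (n-k-1)) := by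
    rcases Nat.eq_zero_or_pos (n - (k+1)) with h0 | h0
    · left
      refine ⟨h0, fun x hx => ?_⟩
      have h1 := hmq x hx
      omega
    · right
      refine ⟨by omega, ?_⟩
      simp only [multE, if_neg (Nat.succ_ne_zero k), if_neg (by omega : ¬ n - (k+1) = 0),
        Nat.cast_lt] at hlt
      have : n - (k+1) = n - k - 1 := by omega
      rw [this] at hlt
      exact hlt
  have hcmkq : (G1 n k (lq, mq)).2.count (n-k) = a := by
    simp only [G1, ← ha, count_add, count_sub, count_replicate]
    split_ifs <;> omega
  constructor
  · refine ⟨⟨by push_cast; omega, ?_, ?_⟩, ?_, ?_⟩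
    · -- parts of first
      intro x hx
      simp only [G1, mem_add] at hx
      rcases hx with hx | hx
      · have hxl : x ∈ lq := mem_of_le tsub_le_self hx
        have h1 := hlq x hxl
        have hxne : x ≠ k + 1 := by
          intro hxe
          subst hxe
          exact (count_eq_zero.mp hck1) hx
        omega
      · split_ifs at hx with h0
        · simp at hx
        · rw [eq_of_mem_replicate hx]; omega
    · -- parts of second
      intro x hx
      simp only [G1, mem_add] at hx
      rcases hx with hx | hx
      · have hxm : x ∈ mq := mem_of_le tsub_le_self hx
        have h1 := hmq x hxm
        refine ⟨h1.1, by push_cast; omega⟩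
      · rw [eq_of_mem_replicate hx]
        refine ⟨by omega, by push_cast; omega⟩
    · -- not cond
      simp only [multE]
      rw [if_neg (by omega : ¬ (n-k) = 0), hcmkq]
      split_ifs with hk0
      · exact not_top_lt
      · rw [Nat.cast_lt, not_lt]
        have : (G1 n k (lq, mq)).1.count k = lq.count k + a := by
          simp only [G1, ← ha, if_neg hk0, count_add, count_sub, count_replicate]
          split_ifs <;> omega
        rw [this]
        omega
    · -- third condition
      rcases hmain with ⟨h0, _⟩ | ⟨h0, hlt'⟩
      · left; omega
      · right
        simp only [G1, ← ha, count_add, count_sub, count_replicate]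
        split_ifs <;> omega
  · -- sums
    have hlsum : lq.sum = (lq - replicate a (k+1)).sum + a * (k+1) := by
      conv_lhs => rw [← tsub_add_cancel_of_le hra]
      rw [sum_add, sum_replicate, smul_eq_mul]
    simp only [G1, ← ha, sum_add, sum_replicate, smul_eq_mul]
    rcases hmain with ⟨h0, hemp⟩ | ⟨h0, hlt'⟩
    · -- mq = 0
      have hmq_zero : mq = 0 := eq_zero_of_forall_notMem hemp
      subst hmq_zero
      have hnk10 : n - k - 1 = 0 := by omega
      have hnk1 : n - k = 1 := by omega
      rw [hnk10, hnk1]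
      have hz : (0 : Multiset ℕ) - replicate a 0 = 0 := by
        rw [sub_rep_count_zero (by simp) a]
      rw [hz]
      simp only [sum_zero]
      have e1 : a * (k+1) = a * k + a := by ring
      have e2 : a * 1 = a := by ring
      split_ifs with hk0
      · subst hk0
        simp only [sum_zero]
        omega
      · rw [sum_replicate, smul_eq_mul]
        omega
    · -- generic case
      have hrm' : replicate a (n-k-1) ≤ mq := by
        rw [← le_count_iff_replicate_le]; omega
      have hmsum : mq.sum = (mq - replicate a (n-k-1)).sum + a * (n-k-1) := by
        conv_lhs => rw [← tsub_add_cancel_of_le hrm']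
        rw [sum_add, sum_replicate, smul_eq_mul]
      obtain ⟨j, hj⟩ : ∃ j, n - k - 1 = j + 1 := ⟨n - k - 2, by omega⟩
      have hj2 : n - k = j + 2 := by omega
      rw [hj] at hmsum
      rw [hj, hj2]
      have e1 : a * (k+1) = a * k + a := by ring
      have e2 : a * (j+1) = a * j + a := by ring
      have e3 : a * (j+2) = a * j + a + a := by ring
      split_ifs with hk0
      · subst hk0
        simp only [sum_zero]
        omega
      · rw [sum_replicate, smul_eq_mul]
        omega

end GaussAux

namespace GaussAux
open Multiset

variable {n k : ℕ}

theorem F1_G1 {q : Multiset ℕ × Multiset ℕ} (hq : q ∈ H n (k+1)) :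
    F1 n k (G1 n k q) = q := by
  obtain ⟨lq, mq⟩ := q
  obtain ⟨⟨hkZ, hlq, hmq⟩, hlt⟩ := hq
  simp only at hlq hmq hlt
  have hkn : k < n := by exact_mod_cast (by omega : (k:ℤ) < n)
  set a := lq.count (k+1) with ha
  have hra : replicate a (k+1) ≤ lq := le_count_iff_replicate_le.mp le_rfl
  have hlq0 : lq.count 0 = 0 := by
    rw [count_eq_zero]; intro hmem; have := (hlq 0 hmem).1; omega
  have hmq0 : mq.count 0 = 0 := by
    rw [count_eq_zero]; intro hmem; have := (hmq 0 hmem).1; omega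
  have hcnk : mq.count (n-k) = 0 := by
    refine count_eq_zero_big hmq ?_
    push_cast; omega
  have hmain : (n - (k+1) = 0 ∧ (∀ x ∈ mq, False)) ∨ (n - (k+1) ≠ 0 ∧ a < mq.count (n-k-1)) := by
    rcases Nat.eq_zero_or_pos (n - (k+1)) with h0 | h0
    · left
      refine ⟨h0, fun x hx => ?_⟩
      have h1 := hmq x hx
      omega
    · right
      refine ⟨by omega, ?_⟩
      simp only [multE, if_neg (Nat.succ_ne_zero k), if_neg (by omega : ¬ n - (k+1) = 0),
        Nat.cast_lt] at hlt
      have : n - (k+1) = n - k - 1 := by omega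
      rw [this] at hlt
      exact hlt
  have hcmkq : (G1 n k (lq, mq)).2.count (n-k) = a := by
    simp only [G1, ← ha, count_add, count_sub, count_replicate]
    split_ifs <;> omega
  simp only [F1, G1, ← ha] at hcmkq ⊢
  rw [hcmkq]
  refine Prod.ext ?_ ?_
  · -- first component
    simp only
    rcases Nat.eq_zero_or_pos k with rfl | hk0
    · rw [if_pos rfl, add_zero]
      have hz : (lq - replicate a (0+1)).count 0 = 0 := by
        rw [count_sub, count_replicate]
        rw [hlq0]
        split_ifs <;> omega
      rw [sub_rep_count_zero hz a]
      exact tsub_add_cancel_of_le hra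
    · rw [if_neg (by omega), add_tsub_cancel_right]
      exact tsub_add_cancel_of_le hra
  · -- second component
    simp only
    rw [add_tsub_cancel_right]
    split_ifs with h0
    · rw [add_zero]
      have hz : mq.count (n-k-1) = 0 := by rw [h0]; exact hmq0
      rw [sub_rep_count_zero hz a]
    · rcases hmain with ⟨h1, _⟩ | ⟨h1, hlt'⟩
      · omega
      · refine tsub_add_cancel_of_le ?_
        rw [← le_count_iff_replicate_le]
        omega

end GaussAux

namespace GaussAux
open Multiset

variable (n k : ℕ)

def F2 (p : Multiset ℕ × Multiset ℕ) : Multiset ℕ × Multiset ℕ :=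
  (p.1 - replicate (p.2.count (n-k)) k, p.2 - replicate (p.2.count (n-k)) (n-k))

def G2 (t : ℕ) (q : Multiset ℕ × Multiset ℕ) : Multiset ℕ × Multiset ℕ :=
  (q.1 + (if k = 0 then 0 else replicate t k), q.2 + replicate t (n-k))

variable {n k}

theorem F2_spec (hn : 1 ≤ n) (hk : k ≤ n) {p : Multiset ℕ × Multiset ℕ} (hp : p ∈ S2 n k) :
    F2 n k p ∈ P ((n:ℤ) - 2) k ∧
      (F2 n k p).1.sum + (F2 n k p).2.sum + (p.2.count (n-k)) * n = p.1.sum + p.2.sum := by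
  obtain ⟨l, m⟩ := p
  obtain ⟨⟨hkZ, hl, hm⟩, hnc, hne, hcnt⟩ := hp
  simp only at hl hm hnc hne hcnt
  have hkn : k < n := k_lt_n_of_not hn hk hnc
  set b := m.count (n-k) with hb
  have hnk2 : 2 ≤ n - k := by omega
  have hrm : replicate b (n-k) ≤ m := le_count_iff_replicate_le.mp le_rfl
  have hmsum : m.sum = (m - replicate b (n-k)).sum + b * (n-k) := by
    conv_lhs => rw [← tsub_add_cancel_of_le hrm]
    rw [sum_add, sum_replicate, smul_eq_mul]
  have hlsum : l.sum = (l - replicate b k).sum + b * k := by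
    rcases Nat.eq_zero_or_pos k with rfl | hk0
    · rw [sub_rep_count_zero (count_zero_parts hl) b, Nat.mul_zero, Nat.add_zero]
    · have := b_le_count (by omega) (by omega) hnc
      conv_lhs => rw [← tsub_add_cancel_of_le (le_count_iff_replicate_le.mp this)]
      rw [sum_add, sum_replicate, smul_eq_mul]
  have hcnkm : (m - replicate b (n-k)).count (n-k) = 0 := by
    rw [count_sub, count_replicate]
    split_ifs <;> omega
  constructor
  · refine ⟨by push_cast; omega, ?_, ?_⟩
    · intro x hx
      have hxl : x ∈ l := mem_of_le tsub_le_self hx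
      exact hl x hxl
    · intro x hx
      simp only [F2] at hx
      have hxm : x ∈ m := mem_of_le tsub_le_self hx
      have h1 := hm x hxm
      have hxne : x ≠ n - k := by
        intro hxe
        subst hxe
        exact (count_eq_zero.mp hcnkm) hx
      have hxne2 : x ≠ n - k - 1 := by
        intro hxe
        have : x ∈ m := hxm
        rw [hxe] at this
        exact (count_eq_zero.mp hcnt) this
      refine ⟨h1.1, ?_⟩
      have := h1.2
      push_cast
      omega
  · simp only [F2, ← hb]
    obtain ⟨j, hj⟩ : ∃ j, n - k = j := ⟨n - k, rfl⟩
    have hnkj : n = k + j := by omega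
    rw [hj] at hmsum ⊢
    have e1 : b * (k + j) = b * k + b * j := by ring
    rw [hnkj]
    omega

theorem G2_F2 (hn : 1 ≤ n) (hk : k ≤ n) {p : Multiset ℕ × Multiset ℕ} (hp : p ∈ S2 n k) :
    G2 n k (p.2.count (n-k)) (F2 n k p) = p := by
  obtain ⟨l, m⟩ := p
  obtain ⟨⟨hkZ, hl, hm⟩, hnc, hne, hcnt⟩ := hp
  simp only at hl hm hnc hne hcnt
  have hkn : k < n := k_lt_n_of_not hn hk hnc
  set b := m.count (n-k) with hb
  have hrm : replicate b (n-k) ≤ m := le_count_iff_replicate_le.mp le_rfl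
  simp only [F2, G2, ← hb]
  refine Prod.ext ?_ ?_
  · simp only
    rcases Nat.eq_zero_or_pos k with rfl | hk0
    · rw [if_pos rfl, add_zero, sub_rep_count_zero (count_zero_parts hl) b]
    · rw [if_neg (by omega)]
      exact tsub_add_cancel_of_le
        (le_count_iff_replicate_le.mp (b_le_count (by omega) (by omega) hnc))
  · simp only
    exact tsub_add_cancel_of_le hrm

theorem G2_count {q : Multiset ℕ × Multiset ℕ} (t : ℕ)
    (hq : q ∈ P ((n:ℤ) - 2) k) : (G2 n k t q).2.count (n-k) = t := by
  obtain ⟨lq, mq⟩ := q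
  obtain ⟨hkZ, hlq, hmq⟩ := hq
  simp only at hlq hmq
  have hcnk : mq.count (n-k) = 0 := by
    refine count_eq_zero_big hmq ?_
    have : 2 ≤ n - k := by omega
    push_cast
    omega
  simp only [G2, count_add, count_replicate, hcnk]
  simp

theorem G2_spec (hn : 1 ≤ n) {q : Multiset ℕ × Multiset ℕ} (t : ℕ)
    (hq : q ∈ P ((n:ℤ) - 2) k) :
    G2 n k t q ∈ S2 n k ∧
      (G2 n k t q).1.sum + (G2 n k t q).2.sum = q.1.sum + q.2.sum + t * n := by
  obtain ⟨lq, mq⟩ := q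
  obtain ⟨hkZ, hlq, hmq⟩ := hq
  simp only at hlq hmq
  have hk2 : k + 2 ≤ n := by omega
  have hnk2 : 2 ≤ n - k := by omega
  have hcnk : mq.count (n-k) = 0 := by
    refine count_eq_zero_big hmq ?_
    push_cast; omega
  have hcnk1 : mq.count (n-k-1) = 0 := by
    refine count_eq_zero_big hmq ?_
    push_cast; omega
  have hcG : (G2 n k t (lq, mq)).2.count (n-k) = t := G2_count t ⟨hkZ, hlq, hmq⟩
  constructor
  · refine ⟨⟨by push_cast; omega, ?_, ?_⟩, ?_, by omega, ?_⟩
    · intro x hx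
      simp only [G2, mem_add] at hx
      rcases hx with hx | hx
      · exact hlq x hx
      · split_ifs at hx with h0
        · simp at hx
        · rw [eq_of_mem_replicate hx]; omega
    · intro x hx
      simp only [G2, mem_add] at hx
      rcases hx with hx | hx
      · have h1 := hmq x hx
        refine ⟨h1.1, ?_⟩
        have := h1.2
        push_cast
        omega
      · rw [eq_of_mem_replicate hx]
        refine ⟨by omega, by push_cast; omega⟩
    · -- not cond
      simp only [multE]
      rw [if_neg (by omega : ¬ (n-k) = 0)]
      simp only [G2] at hcG ⊢
      rw [hcG]
      split_ifs with hk0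
      · exact not_top_lt
      · rw [Nat.cast_lt, not_lt, count_add, count_replicate]
        split_ifs <;> omega
    · -- count n-k-1 = 0
      simp only [G2, count_add, count_replicate]
      split_ifs <;> omega
  · simp only [G2, sum_add, sum_replicate, smul_eq_mul]
    obtain ⟨j, hj⟩ : ∃ j, n - k = j := ⟨n - k, rfl⟩
    have hnkj : n = k + j := by omega
    rw [hj, hnkj]
    have e1 : t * (k + j) = t * k + t * j := by ring
    split_ifs with hk0
    · subst hk0
      simp only [sum_zero]
      omega
    · rw [sum_replicate, smul_eq_mul]
      omega

theorem F2_G2 (hn : 1 ≤ n) {q : Multiset ℕ × Multiset ℕ} (t : ℕ)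
    (hq : q ∈ P ((n:ℤ) - 2) k) : F2 n k (G2 n k t q) = q := by
  obtain ⟨lq, mq⟩ := q
  obtain ⟨hkZ, hlq, hmq⟩ := hq
  simp only at hlq hmq
  have hcG : (G2 n k t (lq, mq)).2.count (n-k) = t := G2_count t ⟨hkZ, hlq, hmq⟩
  have hlq0 : lq.count 0 = 0 := by
    rw [count_eq_zero]; intro hmem; have := (hlq 0 hmem).1; omega
  simp only [F2, G2] at hcG ⊢
  rw [hcG]
  refine Prod.ext ?_ ?_
  · simp only
    split_ifs with hk0
    · rw [add_zero]
      rw [hk0, sub_rep_count_zero hlq0 t]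
    · exact add_tsub_cancel_right _ _
  · simp only
    exact add_tsub_cancel_right _ _

end GaussAux

namespace GaussAux
open Multiset

lemma card_le_sum {s : Multiset ℕ} (hs : ∀ x ∈ s, 0 < x) : Multiset.card s ≤ s.sum := by
  simpa using Multiset.card_nsmul_le_sum (fun x hx => hs x hx)

end GaussAux

open GaussAux in
/-- Combinatorial telescoping relation for Gauss's identity. -/
theorem gauss_telescoping (n k N : ℕ) (hn : 1 ≤ n) (hk : k ≤ n) :
    Nat.card {p | p ∈ P n k ∧ p.1.sum + p.2.sum = N} =
      (∑' t : ℕ, Nat.card {p | p ∈ P ((n : ℤ) - 2) k ∧ p.1.sum + p.2.sum + t * n = N}) +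
      Nat.card {p | p ∈ H n k ∧ p.1.sum + p.2.sum = N} +
      Nat.card {p | p ∈ H n (k + 1) ∧ p.1.sum + p.2.sum = N} := by
  classical
  set A : Set (Multiset ℕ × Multiset ℕ) := {p | p ∈ P n k ∧ p.1.sum + p.2.sum = N} with hA
  set A0 : Set (Multiset ℕ × Multiset ℕ) := {p | p ∈ H n k ∧ p.1.sum + p.2.sum = N} with hA0
  set A1 : Set (Multiset ℕ × Multiset ℕ) := {p | p ∈ S1 n k ∧ p.1.sum + p.2.sum = N} with hA1
  set A2 : Set (Multiset ℕ × Multiset ℕ) := {p | p ∈ S2 n k ∧ p.1.sum + p.2.sum = N} with hA2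
  set A1' : Set (Multiset ℕ × Multiset ℕ) := {p | p ∈ H n (k+1) ∧ p.1.sum + p.2.sum = N} with hA1'
  set X : ℕ → Set (Multiset ℕ × Multiset ℕ) :=
    fun t => {p | p ∈ P ((n : ℤ) - 2) k ∧ p.1.sum + p.2.sum + t * n = N} with hX
  -- finiteness
  have finA : A.Finite := (finite_master N).subset (by
    rintro ⟨l, m⟩ ⟨⟨_, hl, hm⟩, hs⟩
    exact ⟨fun x hx => (hl x hx).1, fun x hx => (hm x hx).1, le_of_eq hs⟩)
  have finA0 : A0.Finite := (finite_master N).subset (by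
    rintro ⟨l, m⟩ ⟨⟨⟨_, hl, hm⟩, _⟩, hs⟩
    exact ⟨fun x hx => (hl x hx).1, fun x hx => (hm x hx).1, le_of_eq hs⟩)
  have finA1 : A1.Finite := (finite_master N).subset (by
    rintro ⟨l, m⟩ ⟨⟨⟨_, hl, hm⟩, _⟩, hs⟩
    exact ⟨fun x hx => (hl x hx).1, fun x hx => (hm x hx).1, le_of_eq hs⟩)
  have finA2 : A2.Finite := (finite_master N).subset (by
    rintro ⟨l, m⟩ ⟨⟨⟨_, hl, hm⟩, _⟩, hs⟩
    exact ⟨fun x hx => (hl x hx).1, fun x hx => (hm x hx).1, le_of_eq hs⟩)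
  have finA1' : A1'.Finite := (finite_master N).subset (by
    rintro ⟨l, m⟩ ⟨⟨⟨_, hl, hm⟩, _⟩, hs⟩
    exact ⟨fun x hx => (hl x hx).1, fun x hx => (hm x hx).1, le_of_eq hs⟩)
  have finX : ∀ t, (X t).Finite := fun t => (finite_master N).subset (by
    rintro ⟨l, m⟩ ⟨⟨_, hl, hm⟩, hs⟩
    exact ⟨fun x hx => (hl x hx).1, fun x hx => (hm x hx).1, by omega⟩)
  -- decomposition
  have hdecomp : A = A0 ∪ (A1 ∪ A2) := by
    ext p
    constructor
    · rintro ⟨hp, hs⟩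
      by_cases hc : multE k p.1 < multE (n-k) p.2
      · exact Or.inl ⟨⟨hp, hc⟩, hs⟩
      · by_cases hor : n - k - 1 = 0 ∨ 0 < p.2.count (n-k-1)
        · exact Or.inr (Or.inl ⟨⟨hp, hc, hor⟩, hs⟩)
        · push_neg at hor
          exact Or.inr (Or.inr ⟨⟨hp, hc, hor.1, by omega⟩, hs⟩)
    · rintro (⟨⟨hp, _⟩, hs⟩ | ⟨⟨hp, _⟩, hs⟩ | ⟨⟨hp, _⟩, hs⟩) <;> exact ⟨hp, hs⟩
  have hd1 : Disjoint A0 (A1 ∪ A2) := by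
    rw [Set.disjoint_left]
    rintro p ⟨⟨_, hc⟩, _⟩ (⟨⟨_, hc', _⟩, _⟩ | ⟨⟨_, hc', _⟩, _⟩) <;> exact hc' hc
  have hd2 : Disjoint A1 A2 := by
    rw [Set.disjoint_left]
    rintro p ⟨⟨_, _, hor⟩, _⟩ ⟨⟨_, _, hne, hcnt⟩, _⟩
    rcases hor with h | h
    · exact hne h
    · omega
  -- cardinality of A
  have hcardA : A.ncard = A0.ncard + (A1.ncard + A2.ncard) := by
    rw [hdecomp, Set.ncard_union_eq hd1 finA0 (finA1.union finA2),
      Set.ncard_union_eq hd2 finA1 finA2]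
  -- A1 ↔ A1'
  have hA1card : A1.ncard = A1'.ncard := by
    have himg : F1 n k '' A1 = A1' := by
      ext q
      constructor
      · rintro ⟨p, ⟨hp, hs⟩, rfl⟩
        obtain ⟨h1, h2⟩ := F1_spec hn hk hp
        exact ⟨h1, by omega⟩
      · rintro ⟨hq, hs⟩
        refine ⟨G1 n k q, ?_, F1_G1 hq⟩
        obtain ⟨h1, h2⟩ := G1_spec hq
        exact ⟨h1, by omega⟩
    have hinj : Set.InjOn (F1 n k) A1 := by
      intro p hp p' hp' he
      rw [← G1_F1 hn hk hp.1, ← G1_F1 hn hk hp'.1, he]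
    rw [← himg, Set.ncard_image_of_injOn hinj]
  -- A2 ↔ sum over t
  have ht_le : ∀ p ∈ A2, p.2.count (n-k) ≤ N := by
    rintro ⟨l, m⟩ ⟨⟨⟨_, hl, hm⟩, _⟩, hs⟩
    simp only at hm hs ⊢
    calc m.count (n-k) ≤ Multiset.card m := Multiset.count_le_card _ _
    _ ≤ m.sum := card_le_sum (fun x hx => (hm x hx).1)
    _ ≤ N := by omega
  have hA2card : A2.ncard = ∑ t ∈ Finset.range (N+1), (X t).ncard := by
    have hsplit : A2 = ⋃ t ∈ Finset.range (N+1), {p ∈ A2 | p.2.count (n-k) = t} := by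
      ext p
      simp only [Set.mem_iUnion, Set.mem_setOf_eq, Finset.mem_range]
      constructor
      · intro hp
        exact ⟨p.2.count (n-k), by have := ht_le p hp; omega, hp, rfl⟩
      · rintro ⟨t, _, hp, _⟩
        exact hp
    have hfib : ∀ t, {p ∈ A2 | p.2.count (n-k) = t}.ncard = (X t).ncard := by
      intro t
      have himg : F2 n k '' {p ∈ A2 | p.2.count (n-k) = t} = X t := by
        ext q
        constructor
        · rintro ⟨p, ⟨⟨hp, hs⟩, hcnt⟩, rfl⟩
          obtain ⟨h1, h2⟩ := F2_spec hn hk hp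
          rw [hcnt] at h2
          exact ⟨h1, by omega⟩
        · rintro ⟨hq, hs⟩
          refine ⟨G2 n k t q, ⟨⟨?_, ?_⟩, G2_count t hq⟩, F2_G2 hn t hq⟩
          · exact (G2_spec hn t hq).1
          · have := (G2_spec hn t hq).2
            omega
      have hinj : Set.InjOn (F2 n k) {p ∈ A2 | p.2.count (n-k) = t} := by
        rintro p ⟨⟨hp, _⟩, hcnt⟩ p' ⟨⟨hp', _⟩, hcnt'⟩ he
        have e1 := G2_F2 hn hk hp
        have e2 := G2_F2 hn hk hp'
        rw [hcnt] at e1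
        rw [hcnt'] at e2
        rw [← e1, ← e2, he]
      rw [← himg, Set.ncard_image_of_injOn hinj]
    rw [hsplit, ncard_biUnion _ _ (fun t => finA2.subset (Set.sep_subset _ _)) ?_]
    · exact Finset.sum_congr rfl (fun t _ => hfib t)
    · intro i _ j _ hij
      rw [Set.disjoint_left]
      rintro p ⟨_, hi⟩ ⟨_, hj⟩
      exact hij (hi ▸ hj ▸ rfl)
  -- tsum
  have htsum : (∑' t : ℕ, Nat.card (X t)) = ∑ t ∈ Finset.range (N+1), (X t).ncard := by
    rw [tsum_eq_sum (s := Finset.range (N+1)) ?_]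
    · exact Finset.sum_congr rfl (fun t _ => Nat.card_coe_set_eq _)
    · intro t ht
      rw [Finset.mem_range] at ht
      have : X t = ∅ := by
        ext p
        simp only [hX, Set.mem_setOf_eq, Set.mem_empty_iff_false, iff_false]
        rintro ⟨_, hs⟩
        have : t * n ≥ t := Nat.le_mul_of_pos_right t hn
        omega
      rw [this]
      simp
  -- conclude
  have e0 : Nat.card ↥A = A.ncard := Nat.card_coe_set_eq _
  have e1 : Nat.card ↥A0 = A0.ncard := Nat.card_coe_set_eq _
  have e2 : Nat.card ↥A1' = A1'.ncard := Nat.card_coe_set_eq _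
  rw [e0, hcardA, htsum, ← hA2card, e1, e2, ← hA1card]
  omega
end

section
/- Vanishing of the Sylvester alternating counts: Let n ≥ 1 be an integer and N a nonnegative integer, and write c_{n,k}(N) for the number of elements of Q_{n,k} of weight N. Then ∑_{k=0}^∞ (−1)^k c_{n,k}(N) = 0; the sum over k has only finitely many nonzero terms. -/
/-- `Q n k` is the set of partitions `λ` (multisets of positive integers) such that
no part of `λ` equals `2k+1` and `λ` has exactly `n - k` parts strictly greater
than `k`; it is empty when `k > n`. -/
def Q (n k : ℕ) : Set (Multiset ℕ) :=
  {lam | (∀ x ∈ lam, 0 < x ∧ x ≠ 2 * k + 1) ∧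
    (lam.filter (fun x => k < x)).card + k = n}

/-- The weight of an element of `Q n k`: `k(3k+1)/2 + |λ|`. -/
def wt (k : ℕ) (lam : Multiset ℕ) : ℕ := k * (3 * k + 1) / 2 + lam.sum

/-!
Write `P_k = ∏_{i ≤ k} (1 - X^i)⁻¹` for the generating function of partitions with parts `≤ k`.
Deleting one part `v` from the partitions that contain one gives linear relations between
generating functions. From them, the partitions with exactly `m` parts `> k` have generating
function `X^(m(k+1)) P_k P_m`, and discarding those with a part `2k+1`, the weight series of
`Q n k` is `X^(e_k) P_k P_(n-k) (1 - X^k + X^n)` with `e_k = k(3k+1)/2 + (n-k)(k+1)`.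
Multiplied by `1 - X^n`, the `k`-th term becomes `Z_k + Z_(k+1)` with
`Z_k = X^(e_k) P_(k-1) P_(n-k)` (read as `0` for `k = 0` and `k = n + 1`), so the alternating sum
telescopes to `0`; as `n ≥ 1`, `1 - X^n` is a unit.
-/

open PowerSeries

theorem PowerSeries.eq_zero_of_succ_dvd_of_X_pow_dvd {R : Type*} [CommSemiring R] (f : ℕ → R⟦X⟧)
    (hdvd : ∀ k, f (k + 1) ∣ f k) (hX : ∀ k, X ^ k ∣ f k) (k : ℕ) : f k = 0 := by
  have hfar : ∀ t, f (k + t) ∣ f k := fun t => by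
    induction t with
    | zero => rfl
    | succ t ih => exact (hdvd (k + t)).trans ih
  ext M
  have := X_pow_dvd_iff.1 ((pow_dvd_pow X (by omega : M + 1 ≤ k + (M + 1))).trans
    ((hX _).trans (hfar (M + 1))))
  simpa using this M (by omega)

lemma Multiset.filter_lt_eq_filter_succ_lt {k : ℕ} {l : Multiset ℕ} (h : k + 1 ∉ l) :
    l.filter (k < ·) = l.filter (k + 1 < ·) :=
  Multiset.filter_congr fun x hx => by
    have : x ≠ k + 1 := fun hxk => h (hxk ▸ hx)
    omega

namespace Sylvester

def partitionsWith (p : Multiset ℕ → Prop) (M : ℕ) : Set (Multiset ℕ) :=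
  {l | (∀ x ∈ l, 0 < x) ∧ l.sum = M ∧ p l}

lemma finite_partitionsWith (p : Multiset ℕ → Prop) (M : ℕ) : (partitionsWith p M).Finite :=
  (Set.finite_range (Nat.Partition.parts : M.Partition → Multiset ℕ)).subset
    fun l ⟨hpos, hsum, _⟩ => ⟨⟨l, fun hx => hpos _ hx, hsum⟩, rfl⟩

lemma partitionsWith_eq_union_image_cons (p : Multiset ℕ → Prop) {v : ℕ} (hv : 0 < v) (M : ℕ) :
    partitionsWith p (M + v) = partitionsWith (fun l => p l ∧ v ∉ l) (M + v) ∪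
      (v ::ₘ ·) '' partitionsWith (fun l => p (v ::ₘ l)) M := by
  ext l
  simp only [partitionsWith, Set.mem_union, Set.mem_image, Set.mem_ofPred_eq]
  by_cases hvl : v ∈ l
  · obtain ⟨l', rfl⟩ : ∃ l', l = v ::ₘ l' := ⟨l.erase v, (Multiset.cons_erase hvl).symm⟩
    simp [hv, add_comm]
  · have : ∀ l', v ::ₘ l' ≠ l := fun l' h => hvl (h ▸ Multiset.mem_cons_self v l')
    simp [hvl, this]

lemma ncard_partitionsWith_add (p : Multiset ℕ → Prop) {v : ℕ} (hv : 0 < v) (M : ℕ) :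
    (partitionsWith p (M + v)).ncard =
      (partitionsWith (fun l => p l ∧ v ∉ l) (M + v)).ncard +
        (partitionsWith (fun l => p (v ::ₘ l)) M).ncard := by
  rw [partitionsWith_eq_union_image_cons p hv, Set.ncard_union_eq _ (finite_partitionsWith _ _)
      ((finite_partitionsWith _ _).image _),
    Set.ncard_image_of_injective _ fun _ _ h => (Multiset.cons_inj_right v).1 h]
  exact Set.disjoint_left.2 fun l hl ⟨l', _, hl'⟩ => hl.2.2.2 (hl' ▸ Multiset.mem_cons_self v l')

lemma partitionsWith_and_notMem_of_lt (p : Multiset ℕ → Prop) {v M : ℕ} (h : M < v) :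
    partitionsWith (fun l => p l ∧ v ∉ l) M = partitionsWith p M := by
  ext l
  simp only [partitionsWith, Set.mem_ofPred_eq]
  refine ⟨fun ⟨hpos, hsum, hp, _⟩ => ⟨hpos, hsum, hp⟩,
    fun ⟨hpos, hsum, hp⟩ => ⟨hpos, hsum, hp, fun hvl => ?_⟩⟩
  exact (Multiset.le_sum_of_mem hvl).not_gt (hsum ▸ h)

noncomputable def partitionSeries (p : Multiset ℕ → Prop) : ℤ⟦X⟧ :=
  mk fun M => ((partitionsWith p M).ncard : ℤ)

theorem partitionSeries_eq_add_X_pow_mul (p : Multiset ℕ → Prop) {v : ℕ} (hv : 0 < v) :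
    partitionSeries p = partitionSeries (fun l => p l ∧ v ∉ l) +
      X ^ v * partitionSeries (fun l => p (v ::ₘ l)) := by
  ext M
  rw [map_add, coeff_X_pow_mul']
  split_ifs with hvM
  · obtain ⟨M, rfl⟩ := Nat.exists_eq_add_of_le' hvM
    simp only [partitionSeries, coeff_mk, Nat.add_sub_cancel, ncard_partitionsWith_add p hv]
    push_cast
    rfl
  · simp [partitionSeries, partitionsWith_and_notMem_of_lt p (not_le.1 hvM)]

lemma X_pow_dvd_partitionSeries {p : Multiset ℕ → Prop} {d : ℕ}
    (h : ∀ l, p l → d ≤ l.sum) : X ^ d ∣ partitionSeries p := by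
  refine X_pow_dvd_iff.2 fun M hM => ?_
  suffices partitionsWith p M = ∅ by simp [partitionSeries, this]
  exact Set.eq_empty_of_forall_notMem fun l ⟨_, hsum, hp⟩ => (h l hp).not_gt (hsum ▸ hM)

noncomputable def partsLESeries (k : ℕ) : ℤ⟦X⟧ :=
  partitionSeries fun l => ∀ x ∈ l, x ≤ k

noncomputable def bigPartsSeries (k m : ℕ) : ℤ⟦X⟧ :=
  partitionSeries fun l => (l.filter (k < ·)).card = m

noncomputable def bigPartsAvoidingSeries (k m : ℕ) : ℤ⟦X⟧ :=
  partitionSeries fun l => (l.filter (k < ·)).card = m ∧ 2 * k + 1 ∉ l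

lemma partsLESeries_zero : partsLESeries 0 = 1 := by
  have hset (M : ℕ) : partitionsWith (fun l => ∀ x ∈ l, x ≤ 0) M = if M = 0 then {0} else ∅ := by
    have hzero (l : Multiset ℕ) : ((∀ x ∈ l, 0 < x) ∧ ∀ x ∈ l, x ≤ 0) ↔ l = 0 := by
      rw [Multiset.eq_zero_iff_forall_notMem]
      exact ⟨fun ⟨hpos, hle⟩ x hx => (hpos x hx).not_ge (hle x hx),
        fun h => ⟨fun x hx => (h x hx).elim, fun x hx => (h x hx).elim⟩⟩
    ext l
    simp only [partitionsWith, Set.mem_ofPred_eq, and_left_comm (b := l.sum = M), hzero]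
    split_ifs with hM <;> aesop
  ext M
  rw [partsLESeries, partitionSeries, coeff_mk, hset, coeff_one]
  split_ifs <;> simp

lemma one_sub_X_pow_mul_partsLESeries_succ (k : ℕ) :
    (1 - X ^ (k + 1)) * partsLESeries (k + 1) = partsLESeries k := by
  have h := partitionSeries_eq_add_X_pow_mul (fun l => ∀ x ∈ l, x ≤ k + 1) (v := k + 1) (by omega)
  have hnot : (fun l : Multiset ℕ => (∀ x ∈ l, x ≤ k + 1) ∧ k + 1 ∉ l) =
      fun l => ∀ x ∈ l, x ≤ k := by
    ext l
    refine ⟨fun ⟨hle, hnot⟩ x hx => ?_,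
      fun hle => ⟨fun x hx => (hle x hx).trans k.le_succ, fun h => ?_⟩⟩
    · exact Nat.le_of_lt_succ ((hle x hx).lt_of_ne fun hxk => hnot (hxk ▸ hx))
    · exact (hle _ h).not_gt k.lt_succ_self
  simp only [Multiset.forall_mem_cons, le_refl, true_and, hnot] at h
  rw [partsLESeries, partsLESeries]
  linear_combination h

lemma bigPartsSeries_zero (k : ℕ) : bigPartsSeries k 0 = partsLESeries k := by
  simp only [bigPartsSeries, partsLESeries, Multiset.card_eq_zero, Multiset.filter_eq_nil, not_lt]

lemma one_sub_X_pow_mul_bigPartsSeries_succ (k m : ℕ) :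
    (1 - X ^ (k + 1)) * bigPartsSeries (k + 1) (m + 1) =
      bigPartsSeries k (m + 1) - X ^ (k + 1) * bigPartsSeries k m := by
  have hk := partitionSeries_eq_add_X_pow_mul (fun l => (l.filter (k < ·)).card = m + 1)
    (v := k + 1) (by omega)
  have hk₁ := partitionSeries_eq_add_X_pow_mul (fun l => (l.filter (k + 1 < ·)).card = m + 1)
    (v := k + 1) (by omega)
  have hnot : (fun l : Multiset ℕ => (l.filter (k < ·)).card = m + 1 ∧ k + 1 ∉ l) =
      fun l => (l.filter (k + 1 < ·)).card = m + 1 ∧ k + 1 ∉ l := by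
    ext l
    exact ⟨fun ⟨hc, h⟩ => ⟨Multiset.filter_lt_eq_filter_succ_lt h ▸ hc, h⟩,
      fun ⟨hc, h⟩ => ⟨(Multiset.filter_lt_eq_filter_succ_lt h).symm ▸ hc, h⟩⟩
  simp only [Multiset.filter_cons_of_pos _ k.lt_succ_self,
    Multiset.filter_cons_of_neg _ (lt_irrefl _), Multiset.card_cons, add_left_inj, hnot] at hk hk₁
  change bigPartsSeries k (m + 1) = _ + X ^ (k + 1) * bigPartsSeries k m at hk
  change bigPartsSeries (k + 1) (m + 1) = _ + X ^ (k + 1) * bigPartsSeries (k + 1) (m + 1) at hk₁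
  linear_combination hk₁ - hk

lemma X_pow_dvd_bigPartsSeries (k m : ℕ) : X ^ (m * (k + 1)) ∣ bigPartsSeries k m := by
  refine X_pow_dvd_partitionSeries fun l hm => ?_
  have hfilter := Multiset.card_nsmul_le_sum (s := l.filter (k < ·)) (a := k + 1)
    fun x hx => Multiset.of_mem_filter hx
  rw [← Multiset.filter_add_not (k < ·) l, Multiset.sum_add]
  rw [hm, smul_eq_mul] at hfilter
  omega

theorem bigPartsSeries_eq (k m : ℕ) :
    bigPartsSeries k m = X ^ (m * (k + 1)) * partsLESeries k * partsLESeries m := by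
  induction m generalizing k with
  | zero => rw [bigPartsSeries_zero, partsLESeries_zero, zero_mul, pow_zero, one_mul, mul_one]
  | succ m ih =>
    set D : ℕ → ℤ⟦X⟧ := fun j =>
      bigPartsSeries j (m + 1) - X ^ ((m + 1) * (j + 1)) * partsLESeries j * partsLESeries (m + 1)
    have hD : ∀ j, D j = (1 - X ^ (j + 1)) * D (j + 1) := fun j => by
      have := one_sub_X_pow_mul_bigPartsSeries_succ j m
      have hj := one_sub_X_pow_mul_partsLESeries_succ j
      have hm := one_sub_X_pow_mul_partsLESeries_succ m
      simp only [D]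
      rw [ih j] at this
      linear_combination (-1 : ℤ⟦X⟧) * this
        + X ^ ((m + 1) * (j + 2)) * partsLESeries (m + 1) * hj
        - X ^ ((m + 1) * (j + 1)) * partsLESeries j * hm
    have hX : ∀ j, X ^ j ∣ D j := fun j =>
      (pow_dvd_pow X (by nlinarith : j ≤ (m + 1) * (j + 1))).trans <|
        dvd_sub (X_pow_dvd_bigPartsSeries j (m + 1)) (dvd_mul_of_dvd_left (dvd_mul_right _ _) _)
    exact sub_eq_zero.1 <|
      PowerSeries.eq_zero_of_succ_dvd_of_X_pow_dvd D (fun j => Dvd.intro_left _ (hD j).symm) hX k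

lemma bigPartsAvoidingSeries_zero (k : ℕ) : bigPartsAvoidingSeries k 0 = partsLESeries k := by
  rw [← bigPartsSeries_zero, bigPartsAvoidingSeries, bigPartsSeries]
  congr 1
  ext l
  refine and_iff_left_of_imp fun h hl => ?_
  rw [Multiset.card_eq_zero, Multiset.filter_eq_nil] at h
  exact h _ hl (by omega)

lemma bigPartsAvoidingSeries_succ (k m : ℕ) :
    bigPartsAvoidingSeries k (m + 1) =
      bigPartsSeries k (m + 1) - X ^ (2 * k + 1) * bigPartsSeries k m := by
  have h := partitionSeries_eq_add_X_pow_mul (fun l => (l.filter (k < ·)).card = m + 1)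
    (v := 2 * k + 1) (by omega)
  simp only [Multiset.filter_cons_of_pos _ (by omega : k < 2 * k + 1), Multiset.card_cons,
    add_left_inj] at h
  change bigPartsSeries k (m + 1) =
    bigPartsAvoidingSeries k (m + 1) + X ^ (2 * k + 1) * bigPartsSeries k m at h
  rw [h]
  ring

theorem bigPartsAvoidingSeries_eq (k d : ℕ) :
    bigPartsAvoidingSeries k d =
      X ^ (d * (k + 1)) * partsLESeries k * partsLESeries d * (1 - X ^ k + X ^ (k + d)) := by
  cases d with
  | zero => simp [bigPartsAvoidingSeries_zero, partsLESeries_zero]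
  | succ m =>
    rw [bigPartsAvoidingSeries_succ, bigPartsSeries_eq, bigPartsSeries_eq,
      ← one_sub_X_pow_mul_partsLESeries_succ m]
    ring

def pentagonal (k : ℕ) : ℕ := k * (3 * k + 1) / 2

lemma pentagonal_succ (k : ℕ) : pentagonal (k + 1) = pentagonal k + (3 * k + 2) := by
  rw [pentagonal, pentagonal,
    show (k + 1) * (3 * (k + 1) + 1) = k * (3 * k + 1) + (3 * k + 2) * 2 by ring,
    Nat.add_mul_div_right _ _ two_pos]

noncomputable def weightSeries (n k : ℕ) : ℤ⟦X⟧ :=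
  mk fun N => Nat.card {lam | lam ∈ Q n k ∧ wt k lam = N}

lemma weightSeries_eq_zero_of_lt {n k : ℕ} (h : n < k) : weightSeries n k = 0 := by
  ext N
  suffices {lam | lam ∈ Q n k ∧ wt k lam = N} = ∅ by simp [weightSeries, this]
  exact Set.eq_empty_of_forall_notMem fun lam ⟨⟨_, hcard⟩, _⟩ => by omega

lemma weightSeries_eq {n k : ℕ} (h : k ≤ n) :
    weightSeries n k = X ^ pentagonal k * bigPartsAvoidingSeries k (n - k) := by
  ext N
  rw [weightSeries, coeff_mk, coeff_X_pow_mul']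
  split_ifs with hN
  · have hset : {lam | lam ∈ Q n k ∧ wt k lam = N} =
        partitionsWith (fun l => (l.filter (k < ·)).card = n - k ∧ 2 * k + 1 ∉ l)
          (N - pentagonal k) := by
      ext lam
      simp only [Q, wt, partitionsWith, Set.mem_ofPred_eq]
      rw [← pentagonal]
      constructor
      · rintro ⟨⟨hparts, hcard⟩, hwt⟩
        exact ⟨fun x hx => (hparts x hx).1, by omega, by omega, fun hv => (hparts _ hv).2 rfl⟩
      · rintro ⟨hpos, hsum, hcard, hv⟩
        exact ⟨⟨fun x hx => ⟨hpos x hx, fun hx' => hv (hx' ▸ hx)⟩, by omega⟩, by omega⟩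
    rw [hset, Nat.card_coe_set_eq, bigPartsAvoidingSeries, partitionSeries, coeff_mk]
  · suffices {lam | lam ∈ Q n k ∧ wt k lam = N} = ∅ by simp [this]
    exact Set.eq_empty_of_forall_notMem fun lam ⟨_, hwt⟩ => hN (hwt ▸ Nat.le_add_right _ _)

-- `Z_k` of the header, as `(1 - X ^ k) * P_k = P_(k-1)`; the factors `1 - X ^ _` make it vanish
-- at `k = 0` and `k = n + 1`.
noncomputable def telescopingTerm (n k : ℕ) : ℤ⟦X⟧ :=
  X ^ (pentagonal k + (n - k) * (k + 1)) * ((1 - X ^ k) * partsLESeries k) *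
    ((1 - X ^ (n + 1 - k)) * partsLESeries (n + 1 - k))

lemma one_sub_X_pow_mul_weightSeries {n k : ℕ} (h : k ≤ n) :
    (1 - X ^ n) * weightSeries n k = telescopingTerm n k + telescopingTerm n (k + 1) := by
  obtain ⟨d, rfl⟩ := Nat.exists_eq_add_of_le h
  rw [weightSeries_eq h, bigPartsAvoidingSeries_eq, Nat.add_sub_cancel_left, telescopingTerm,
    telescopingTerm]
  cases d with
  | zero =>
    simp only [Nat.sub_self, Nat.add_sub_cancel_left, pow_zero, sub_self, mul_zero, zero_mul,
      add_zero, ← one_sub_X_pow_mul_partsLESeries_succ 0]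
    ring
  | succ e =>
    rw [Nat.add_sub_cancel_left, show k + (e + 1) - (k + 1) = e by omega,
      show k + (e + 1) + 1 - k = e + 2 by omega, show k + (e + 1) + 1 - (k + 1) = e + 1 by omega,
      pentagonal_succ,
      ← one_sub_X_pow_mul_partsLESeries_succ k, ← one_sub_X_pow_mul_partsLESeries_succ (e + 1)]
    ring

theorem sum_neg_one_pow_smul_weightSeries_eq_zero {n : ℕ} (hn : 1 ≤ n) :
    ∑ k ∈ Finset.range (n + 1), (-1 : ℤ) ^ k • weightSeries n k = 0 := by
  have hunit : IsUnit (1 - X ^ n : ℤ⟦X⟧) := by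
    rw [isUnit_iff_constantCoeff]
    simp [zero_pow (by omega : n ≠ 0)]
  rw [← hunit.mul_right_eq_zero, Finset.mul_sum]
  calc ∑ k ∈ Finset.range (n + 1), (1 - X ^ n) * (-1 : ℤ) ^ k • weightSeries n k
      = ∑ k ∈ Finset.range (n + 1), ((-1 : ℤ) ^ k • telescopingTerm n k -
          (-1 : ℤ) ^ (k + 1) • telescopingTerm n (k + 1)) := by
        refine Finset.sum_congr rfl fun k hk => ?_
        rw [mul_smul_comm, one_sub_X_pow_mul_weightSeries (Finset.mem_range_succ_iff.1 hk)]
        module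
    _ = 0 := by
        rw [Finset.sum_range_sub']
        simp [telescopingTerm]

end Sylvester

open Sylvester in
/-- Vanishing of the Sylvester alternating counts. -/
theorem sylvester_vanishing (n N : ℕ) (hn : 1 ≤ n) :
    ∑' k : ℕ, ((-1 : ℤ) ^ k * Nat.card {lam | lam ∈ Q n k ∧ wt k lam = N}) = 0 := by
  have hcoeff (k : ℕ) : (-1 : ℤ) ^ k * Nat.card {lam | lam ∈ Q n k ∧ wt k lam = N} =
      coeff N ((-1 : ℤ) ^ k • weightSeries n k) := by
    rw [map_smul, weightSeries, coeff_mk, smul_eq_mul]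
  simp_rw [hcoeff]
  rw [tsum_eq_sum (s := Finset.range (n + 1)), ← map_sum,
    sum_neg_one_pow_smul_weightSeries_eq_zero hn, map_zero]
  intro k hk
  rw [weightSeries_eq_zero_of_lt (by simpa using hk), smul_zero, map_zero]
end
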